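/- arXiv:1911.11607 — 2 statements merged into one kernel-verified Lean document; each statement's English description precedes it below -/
import Mathlib

section
/- Let I be a countable index set, let (P_i)_{i∈I} and (Q_i)_{i∈I} be probability measures on a common measurable space, let (θ_i)_{i∈I} be nonnegative reals with Σ_i θ_i = 1, let p ∈ [0,1], and let f : [0,1] → [0,1] be a convex function such that T(P_i, Q_i)(α) ≥ f(α) for every i ∈ I and every α ∈ [0,1]. Then for every α ∈ [0,1], T(Σ_i θ_i·P_i, (1−p)·Σ_i θ_i·P_i + p·Σ_i θ_i·Q_i)(α) ≥ p·f(α) + (1−p)·(1−α). -/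
open MeasureTheory Filter Set

/-- The trade-off function `T(P,Q)` of two measures: `T(P,Q)(α)` is the minimum type II error
among all tests with type I error at most `α`. -/
noncomputable def tradeOff {Ω : Type*} [MeasurableSpace Ω] (P Q : Measure Ω) (α : ℝ) : ℝ :=
  sInf {β : ℝ | ∃ φ : Ω → ℝ, Measurable φ ∧ (∀ x, φ x ∈ Set.Icc (0:ℝ) 1) ∧
    (∫ x, φ x ∂P) ≤ α ∧ β = 1 - ∫ x, φ x ∂Q}

/-!
Fix a test `φ` with `∫ φ d(∑ θᵢ Pᵢ) ≤ α` and put `αᵢ = ∫ φ dPᵢ`, `qᵢ = ∫ φ dQᵢ`. As `f` is convex,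
nonnegative and `f 1 ≤ T(Pᵢ,Qᵢ)(1) = 0`, it is antitone, so Jensen's inequality gives
`f α ≤ f (∑ θᵢ αᵢ) ≤ ∑ θᵢ f αᵢ ≤ ∑ θᵢ (1 - qᵢ)`, i.e. `f ≤ T(∑ θᵢ Pᵢ, ∑ θᵢ Qᵢ)`. Against the
mixture `(1 - p) P + p Q`, a test of level `α` for `P` has type II error
`p (1 - ∫ φ dQ) + (1 - p) (1 - ∫ φ dP) ≥ p T(P,Q)(α) + (1 - p) (1 - α)`.
-/

section Convex

variable {a b : ℝ} {f : ℝ → ℝ}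

theorem ConvexOn.antitoneOn_of_isMinOn_right (hf : ConvexOn ℝ (Icc a b) f)
    (hmin : IsMinOn f (Icc a b) b) : AntitoneOn f (Icc a b) := by
  intro x hx y hy hxy
  rcases hy.2.lt_or_eq with hyb | rfl
  · exact hf.le_left_of_right_le'' hx ⟨hx.1.trans (hxy.trans hyb.le), le_rfl⟩ hxy hyb
      (isMinOn_iff.1 hmin y hy)
  · exact isMinOn_iff.1 hmin x hx

theorem ConvexOn.exists_supporting_line_of_antitoneOn (hf : ConvexOn ℝ (Icc a b) f)
    (hanti : AntitoneOn f (Icc a b)) {α : ℝ} (hα : α ∈ Ioc a b) :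
    ∃ c ≤ 0, ∀ x ∈ Icc a b, f α + c * (x - α) ≤ f x := by
  have hαI : α ∈ Icc a b := Ioc_subset_Icc_self hα
  set S := slope f α '' Ico a α
  have hS : S.Nonempty := ⟨_, mem_image_of_mem _ ⟨le_rfl, hα.1⟩⟩
  have hS0 : ∀ s ∈ S, s ≤ 0 := by
    rintro _ ⟨u, hu, rfl⟩
    rw [slope_def_field]
    exact div_nonpos_of_nonneg_of_nonpos
      (sub_nonneg.2 (hanti ⟨hu.1, hu.2.le.trans hα.2⟩ hαI hu.2.le)) (sub_nonpos.2 hu.2.le)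
  refine ⟨sSup S, csSup_le hS hS0, fun x hx => ?_⟩
  rcases lt_trichotomy x α with hxα | rfl | hαx
  · have h := le_csSup ⟨0, hS0⟩ (mem_image_of_mem (slope f α) ⟨hx.1, hxα⟩)
    rw [slope_def_field, div_le_iff_of_neg (sub_neg.2 hxα)] at h
    linarith
  · simp
  · have h : sSup S ≤ slope f α x := csSup_le hS <| by
      rintro _ ⟨u, hu, rfl⟩
      exact hf.slope_mono hαI ⟨⟨hu.1, hu.2.le.trans hα.2⟩, hu.2.ne⟩ ⟨hx, hαx.ne'⟩
        (hu.2.trans hαx).le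
    rw [slope_def_field, le_div_iff₀ (sub_pos.2 hαx)] at h
    linarith

theorem ConvexOn.le_of_hasSum_of_antitoneOn {ι : Type*} (hf : ConvexOn ℝ (Icc a b) f)
    (hanti : AntitoneOn f (Icc a b)) {θ x : ι → ℝ} {m α s : ℝ} (hθ : ∀ i, 0 ≤ θ i)
    (hθ1 : HasSum θ 1) (hx : ∀ i, x i ∈ Icc a b) (hm : HasSum (fun i => θ i * x i) m)
    (hα : α ∈ Icc a b) (hmα : m ≤ α) (hs : HasSum (fun i => θ i * f (x i)) s) : f α ≤ s := by
  rcases hα.1.eq_or_lt with rfl | haα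
  · -- there need not be a supporting line at `a`, but all the mass sits at `a`
    have hdev : HasSum (fun i => θ i * (x i - a)) (m - a) := by
      simpa only [mul_sub, one_mul] using hm.sub (hθ1.mul_right a)
    have hdev0 : ∀ i, 0 ≤ θ i * (x i - a) := fun i => mul_nonneg (hθ i) (sub_nonneg.2 (hx i).1)
    rw [le_antisymm (sub_nonpos.2 hmα) (hdev.nonneg hdev0), hasSum_zero_iff_of_nonneg hdev0] at hdev
    have hterm : ∀ i, θ i * f (x i) = θ i * f a := fun i => by
      rcases mul_eq_zero.1 (congrFun hdev i) with h | h
      · simp [h]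
      · rw [sub_eq_zero.1 h]
    rw [funext hterm] at hs
    simpa using ((hθ1.mul_right (f a)).unique hs).le
  · obtain ⟨c, hc, hline⟩ := hf.exists_supporting_line_of_antitoneOn hanti ⟨haα, hα.2⟩
    have hlin : HasSum (fun i => θ i * (f α + c * (x i - α))) (f α + c * (m - α)) := by
      rw [show f α + c * (m - α) = 1 * (f α - c * α) + c * m by ring,
        funext fun i => show θ i * (f α + c * (x i - α)) = θ i * (f α - c * α) + c * (θ i * x i)
          by ring]
      exact (hθ1.mul_right _).add (hm.mul_left c)
    calc f α ≤ f α + c * (m - α) :=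
          le_add_of_nonneg_right (mul_nonneg_of_nonpos_of_nonpos hc (sub_nonpos.2 hmα))
      _ ≤ s := hasSum_le (fun i => mul_le_mul_of_nonneg_left (hline _ (hx i)) (hθ i)) hlin hs

end Convex

theorem summable_mul_of_mem_Icc {ι : Type*} {θ g : ι → ℝ} {m M : ℝ} (hθ : Summable θ)
    (hg : ∀ i, g i ∈ Icc m M) : Summable fun i => θ i * g i :=
  hθ.abs.mul_right (max |m| |M|) |>.of_norm_bounded fun i => by
    rw [norm_mul, Real.norm_eq_abs, Real.norm_eq_abs]
    exact mul_le_mul_of_nonneg_left (abs_le_max_abs_abs (hg i).1 (hg i).2) (abs_nonneg _)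

section Mixture

variable {Ω ι : Type*} [MeasurableSpace Ω] {θ : ι → ℝ}

theorem isProbabilityMeasure_sum_ofReal_smul (μ : ι → Measure Ω)
    [∀ i, IsProbabilityMeasure (μ i)] (hθ : ∀ i, 0 ≤ θ i) (hθ1 : HasSum θ 1) :
    IsProbabilityMeasure (Measure.sum fun i => ENNReal.ofReal (θ i) • μ i) := by
  constructor
  simp only [Measure.sum_apply _ MeasurableSet.univ, Measure.smul_apply, measure_univ,
    smul_eq_mul, mul_one]
  rw [← ENNReal.ofReal_tsum_of_nonneg hθ hθ1.summable, hθ1.tsum_eq, ENNReal.ofReal_one]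

theorem hasSum_integral_sum_ofReal_smul {μ : ι → Measure Ω} (hθ : ∀ i, 0 ≤ θ i) {g : Ω → ℝ}
    (hg : Integrable g (Measure.sum fun i => ENNReal.ofReal (θ i) • μ i)) :
    HasSum (fun i => θ i * ∫ ω, g ω ∂μ i)
      (∫ ω, g ω ∂Measure.sum fun i => ENNReal.ofReal (θ i) • μ i) := by
  have h := hasSum_integral_measure hg
  simp only [integral_smul_measure, ENNReal.toReal_ofReal, hθ, smul_eq_mul] at h
  exact h

end Mixture

section Test

variable {Ω : Type*} [MeasurableSpace Ω] {μ : Measure Ω} {φ : Ω → ℝ}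

theorem integrable_of_forall_mem_Icc [IsFiniteMeasure μ] (hφm : Measurable φ)
    (hφ : ∀ x, φ x ∈ Icc (0:ℝ) 1) : Integrable φ μ :=
  .of_bound hφm.aestronglyMeasurable 1 <| .of_forall fun x => by
    rw [Real.norm_eq_abs, abs_le]
    constructor <;> linarith [(hφ x).1, (hφ x).2]

theorem integral_le_measureReal_univ [IsFiniteMeasure μ] (hφm : Measurable φ)
    (hφ : ∀ x, φ x ∈ Icc (0:ℝ) 1) : ∫ x, φ x ∂μ ≤ μ.real univ := by
  simpa using integral_mono (integrable_of_forall_mem_Icc hφm hφ) (integrable_const 1)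
    fun x => (hφ x).2

theorem integral_mem_Icc_of_forall_mem_Icc [IsProbabilityMeasure μ] (hφm : Measurable φ)
    (hφ : ∀ x, φ x ∈ Icc (0:ℝ) 1) : ∫ x, φ x ∂μ ∈ Icc (0:ℝ) 1 :=
  ⟨integral_nonneg fun x => (hφ x).1, by simpa using integral_le_measureReal_univ (μ := μ) hφm hφ⟩

end Test

section TradeOff

variable {Ω : Type*} [MeasurableSpace Ω] {P Q : Measure Ω} {φ : Ω → ℝ}

theorem tradeOff_le [IsFiniteMeasure Q] (hφm : Measurable φ) (hφ : ∀ x, φ x ∈ Icc (0:ℝ) 1)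
    {α : ℝ} (hα : ∫ x, φ x ∂P ≤ α) : tradeOff P Q α ≤ 1 - ∫ x, φ x ∂Q := by
  refine csInf_le ⟨1 - Q.real univ, ?_⟩ ⟨φ, hφm, hφ, hα, rfl⟩
  rintro _ ⟨ψ, hψm, hψ, -, rfl⟩
  linarith [integral_le_measureReal_univ (μ := Q) hψm hψ]

theorem le_tradeOff {α β : ℝ} (hα : 0 ≤ α)
    (h : ∀ φ : Ω → ℝ, Measurable φ → (∀ x, φ x ∈ Icc (0:ℝ) 1) → ∫ x, φ x ∂P ≤ α →
      β ≤ 1 - ∫ x, φ x ∂Q) :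
    β ≤ tradeOff P Q α :=
  le_csInf ⟨_, 0, measurable_const, fun _ => ⟨le_rfl, zero_le_one⟩, by simpa using hα, rfl⟩
    fun _ ⟨φ, hφm, hφ, hφP, hβ⟩ => hβ ▸ h φ hφm hφ hφP

theorem tradeOff_one_nonpos [IsProbabilityMeasure P] [IsProbabilityMeasure Q] :
    tradeOff P Q 1 ≤ 0 := by
  simpa using tradeOff_le (P := P) (Q := Q) (φ := fun _ => 1) measurable_const
    (fun _ => ⟨zero_le_one, le_rfl⟩) (by simp)

theorem le_tradeOff_smul_add_smul [IsFiniteMeasure P] [IsFiniteMeasure Q] {p α β : ℝ}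
    (hp : p ∈ Icc (0:ℝ) 1) (hα : 0 ≤ α) (hβ : β ≤ tradeOff P Q α) :
    p * β + (1 - p) * (1 - α) ≤
      tradeOff P (ENNReal.ofReal (1 - p) • P + ENNReal.ofReal p • Q) α := by
  refine le_tradeOff hα fun φ hφm hφ hφP => ?_
  have hφQ : β ≤ 1 - ∫ x, φ x ∂Q := hβ.trans (tradeOff_le hφm hφ hφP)
  rw [integral_add_measure
      ((integrable_of_forall_mem_Icc hφm hφ).smul_measure ENNReal.ofReal_ne_top)
      ((integrable_of_forall_mem_Icc hφm hφ).smul_measure ENNReal.ofReal_ne_top),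
    integral_smul_measure, integral_smul_measure, ENNReal.toReal_ofReal (sub_nonneg.2 hp.2),
    ENNReal.toReal_ofReal hp.1, smul_eq_mul, smul_eq_mul]
  linarith [mul_le_mul_of_nonneg_left hφQ hp.1, mul_le_mul_of_nonneg_left hφP (sub_nonneg.2 hp.2)]

theorem le_tradeOff_sum_ofReal_smul {ι : Type*} {P Q : ι → Measure Ω}
    [∀ i, IsProbabilityMeasure (P i)] [∀ i, IsProbabilityMeasure (Q i)] {θ : ι → ℝ}
    (hθ : ∀ i, 0 ≤ θ i) (hθ1 : HasSum θ 1) {f : ℝ → ℝ} (hconv : ConvexOn ℝ (Icc 0 1) f)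
    (hanti : AntitoneOn f (Icc 0 1))
    (hf : ∀ i, ∀ α ∈ Icc (0:ℝ) 1, f α ≤ tradeOff (P i) (Q i) α) {α : ℝ} (hα : α ∈ Icc (0:ℝ) 1) :
    f α ≤ tradeOff (Measure.sum fun i => ENNReal.ofReal (θ i) • P i)
      (Measure.sum fun i => ENNReal.ofReal (θ i) • Q i) α := by
  have := isProbabilityMeasure_sum_ofReal_smul P hθ hθ1
  have := isProbabilityMeasure_sum_ofReal_smul Q hθ hθ1
  refine le_tradeOff hα.1 fun φ hφm hφ hφP => ?_
  set x := fun i => ∫ ω, φ ω ∂P i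
  have hx : ∀ i, x i ∈ Icc 0 1 := fun i => integral_mem_Icc_of_forall_mem_Icc hφm hφ
  have hfx : ∀ i, f (x i) ∈ Icc (f 1) (f 0) := fun i =>
    ⟨hanti (hx i) ⟨zero_le_one, le_rfl⟩ (hx i).2, hanti ⟨le_rfl, zero_le_one⟩ (hx i) (hx i).1⟩
  have hsum := (summable_mul_of_mem_Icc hθ1.summable hfx).hasSum
  have hQ : HasSum (fun i => θ i * (1 - ∫ ω, φ ω ∂Q i))
      (1 - ∫ ω, φ ω ∂Measure.sum fun i => ENNReal.ofReal (θ i) • Q i) := by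
    simpa only [mul_sub, mul_one] using
      hθ1.sub (hasSum_integral_sum_ofReal_smul hθ (integrable_of_forall_mem_Icc hφm hφ))
  calc f α ≤ ∑' i, θ i * f (x i) :=
        hconv.le_of_hasSum_of_antitoneOn hanti hθ hθ1 hx
          (hasSum_integral_sum_ofReal_smul hθ (integrable_of_forall_mem_Icc hφm hφ)) hα hφP hsum
    _ ≤ _ := hasSum_le (fun i => mul_le_mul_of_nonneg_left
        ((hf i _ (hx i)).trans (tradeOff_le (P := P i) hφm hφ le_rfl)) (hθ i)) hsum hQ

end TradeOff

theorem stmt_0_general {Ω : Type*} [MeasurableSpace Ω] {I : Type*}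
    (P Q : I → Measure Ω) [∀ i, IsProbabilityMeasure (P i)] [∀ i, IsProbabilityMeasure (Q i)]
    (θ : I → ℝ) (hθ : ∀ i, 0 ≤ θ i) (hθsum : ∑' i, θ i = 1)
    (p : ℝ) (hp : p ∈ Set.Icc (0:ℝ) 1)
    (f : ℝ → ℝ) (hconv : ConvexOn ℝ (Set.Icc (0:ℝ) 1) f)
    (hrange : ∀ α ∈ Set.Icc (0:ℝ) 1, f α ∈ Set.Icc (0:ℝ) 1)
    (hf : ∀ i, ∀ α ∈ Set.Icc (0:ℝ) 1, f α ≤ tradeOff (P i) (Q i) α) :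
    ∀ α ∈ Set.Icc (0:ℝ) 1,
      p * f α + (1 - p) * (1 - α) ≤
        tradeOff (Measure.sum (fun i => ENNReal.ofReal (θ i) • P i))
          (ENNReal.ofReal (1 - p) • Measure.sum (fun i => ENNReal.ofReal (θ i) • P i)
            + ENNReal.ofReal p • Measure.sum (fun i => ENNReal.ofReal (θ i) • Q i)) α := by
  intro α hα
  have hθ1 : HasSum θ 1 := by
    refine hθsum ▸ Summable.hasSum ?_
    by_contra h
    simp [tsum_eq_zero_of_not_summable h] at hθsum
  obtain ⟨i⟩ : Nonempty I := by
    by_contra h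
    simp [not_nonempty_iff.1 h] at hθsum
  have hanti : AntitoneOn f (Icc 0 1) := hconv.antitoneOn_of_isMinOn_right <| isMinOn_iff.2
    fun x hx => ((hf i 1 ⟨zero_le_one, le_rfl⟩).trans tradeOff_one_nonpos).trans (hrange x hx).1
  have := isProbabilityMeasure_sum_ofReal_smul P hθ hθ1
  have := isProbabilityMeasure_sum_ofReal_smul Q hθ hθ1
  exact le_tradeOff_smul_add_smul hp hα.1
    (le_tradeOff_sum_ofReal_smul hθ hθ1 hconv hanti hf hα)

theorem stmt_0 {Ω : Type*} [MeasurableSpace Ω] {I : Type*} [Countable I]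
    (P Q : I → Measure Ω) [∀ i, IsProbabilityMeasure (P i)] [∀ i, IsProbabilityMeasure (Q i)]
    (θ : I → ℝ) (hθ : ∀ i, 0 ≤ θ i) (hθsum : ∑' i, θ i = 1)
    (p : ℝ) (hp : p ∈ Set.Icc (0:ℝ) 1)
    (f : ℝ → ℝ) (hconv : ConvexOn ℝ (Set.Icc (0:ℝ) 1) f)
    (hrange : ∀ α ∈ Set.Icc (0:ℝ) 1, f α ∈ Set.Icc (0:ℝ) 1)
    (hf : ∀ i, ∀ α ∈ Set.Icc (0:ℝ) 1, f α ≤ tradeOff (P i) (Q i) α) :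
    ∀ α ∈ Set.Icc (0:ℝ) 1,
      p * f α + (1 - p) * (1 - α) ≤
        tradeOff (Measure.sum (fun i => ENNReal.ofReal (θ i) • P i))
          (ENNReal.ofReal (1 - p) • Measure.sum (fun i => ENNReal.ofReal (θ i) • P i)
            + ENNReal.ofReal p • Measure.sum (fun i => ENNReal.ofReal (θ i) • Q i)) α :=
  stmt_0_general P Q θ hθ hθsum p hp f hconv hrange hf
end

section
/- Let g : [0,1] → ℝ be measurable with g(x) ≥ −1 for all x and ∫₀¹ g(x)⁴ dx < ∞. Then lim_{p→0⁺} (1/p²)·∫₀¹ p·g(x)·log(1 + p·g(x)) dx = ∫₀¹ g(x)² dx (with the convention 0·log 0 = 0). Equivalently, writing f_p for a trade-off function with |f_p′| = 1 + p·g, the sum kl(f_p) + k̃l(f_p) = ∫₀¹ [ −log(1+p·g(x)) + (1+p·g(x))·log(1+p·g(x)) ] dx satisfies (kl(f_p) + k̃l(f_p))/p² → ∫₀¹ g² dx as p → 0⁺. -/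
open MeasureTheory Filter Set Topology

/-!
Since `log (1 + t) = t + O(t²)`, the integrand `(p g) log (1 + p g) / p²` tends to `g²` pointwise,
and for `p ≤ 1/2` it is dominated by `2 g²` (because `|log (1 + t)| ≤ 2 |t|` for `t ≥ -1/2`), which is
integrable as `g² ≤ 1 + g⁴`. Dominated convergence gives the first limit; the second integrand is
the same function, as `-log (1 + t) + (1 + t) log (1 + t) = t log (1 + t)`.
-/

namespace Real

lemma abs_log_one_add_le {t : ℝ} (ht : -(1 / 2) ≤ t) : |log (1 + t)| ≤ 2 * |t| := by
  have hpos : 0 < 1 + t := by linarith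
  have hfrac : |t| / (1 + t) ≤ 2 * |t| := by
    rw [div_le_iff₀ hpos]
    nlinarith [abs_nonneg t]
  rw [abs_le]
  constructor
  · calc -(2 * |t|) ≤ -(|t| / (1 + t)) := neg_le_neg hfrac
      _ ≤ -(-t / (1 + t)) := neg_le_neg (div_le_div_of_nonneg_right (neg_le_abs t) hpos.le)
      _ = 1 - (1 + t)⁻¹ := by field_simp; ring
      _ ≤ log (1 + t) := one_sub_inv_le_log_of_pos hpos
  · calc log (1 + t) ≤ t := by linarith [log_le_sub_one_of_pos hpos]
      _ ≤ 2 * |t| := by linarith [le_abs_self t, abs_nonneg t]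

lemma abs_mul_log_one_add_le {t : ℝ} (ht : -(1 / 2) ≤ t) : |t * log (1 + t)| ≤ 2 * t ^ 2 := by
  rw [abs_mul, ← sq_abs t]
  nlinarith [abs_log_one_add_le ht, abs_nonneg t]

lemma tendsto_inv_sq_mul_mul_log_one_add (c : ℝ) :
    Tendsto (fun p : ℝ => 1 / p ^ 2 * (p * c * log (1 + p * c))) (𝓝[≠] 0) (𝓝 (c ^ 2)) := by
  have hderiv : HasDerivAt (fun p : ℝ => log (1 + p * c)) c 0 := by
    simpa using (((hasDerivAt_id (0 : ℝ)).mul_const c).const_add 1).log (by simp)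
  have hslope := hderiv.tendsto_slope_zero.const_mul c
  rw [← sq] at hslope
  refine hslope.congr' ?_
  filter_upwards [self_mem_nhdsWithin] with p (hp : p ≠ 0)
  simp only [zero_add, zero_mul, add_zero, log_one, sub_zero, smul_eq_mul]
  field_simp

end Real

lemma integrable_sq_of_integrable_pow_four {α : Type*} [MeasurableSpace α] {μ : Measure α}
    [IsFiniteMeasure μ] {f : α → ℝ} (hf : AEStronglyMeasurable f μ)
    (h4 : Integrable (fun x => f x ^ 4) μ) : Integrable (fun x => f x ^ 2) μ := by
  refine ((integrable_const 1).add h4).mono' (hf.pow 2) (Eventually.of_forall fun x => ?_)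
  rw [Real.norm_eq_abs, abs_of_nonneg (sq_nonneg _), Pi.add_apply]
  nlinarith [sq_nonneg (f x ^ 2 - 1)]

lemma tendsto_inv_sq_mul_integral_mul_log_one_add {α : Type*} [MeasurableSpace α]
    {μ : Measure α} {g : α → ℝ} (hmeas : AEMeasurable g μ) (hg : ∀ᵐ x ∂μ, -1 ≤ g x)
    (hint : Integrable (fun x => g x ^ 2) μ) :
    Tendsto (fun p : ℝ => 1 / p ^ 2 * ∫ x, p * g x * Real.log (1 + p * g x) ∂μ)
      (𝓝[>] 0) (𝓝 (∫ x, g x ^ 2 ∂μ)) := by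
  simp_rw [← integral_const_mul]
  refine tendsto_integral_filter_of_dominated_convergence (fun x => 2 * g x ^ 2)
    (Eventually.of_forall fun p => ?_) ?_ (hint.const_mul 2) ?_
  · exact (((hmeas.const_mul p).mul (aemeasurable_const.add (hmeas.const_mul p)).log).const_mul
      _).aestronglyMeasurable
  · filter_upwards [Ioc_mem_nhdsGT (by norm_num : (0 : ℝ) < 1 / 2)] with p ⟨hp0, hp⟩
    filter_upwards [hg] with x hgx
    have hsmall : -(1 / 2) ≤ p * g x := by nlinarith
    calc ‖1 / p ^ 2 * (p * g x * Real.log (1 + p * g x))‖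
        = 1 / p ^ 2 * |p * g x * Real.log (1 + p * g x)| := by
          rw [Real.norm_eq_abs, abs_mul, abs_of_nonneg (by positivity)]
      _ ≤ 1 / p ^ 2 * (2 * (p * g x) ^ 2) := by
          gcongr; exact Real.abs_mul_log_one_add_le hsmall
      _ = 2 * g x ^ 2 := by field_simp
  · exact Eventually.of_forall fun x =>
      (Real.tendsto_inv_sq_mul_mul_log_one_add (g x)).mono_left
        (nhdsWithin_mono _ fun p (hp : 0 < p) => hp.ne')

theorem stmt_15 (g : ℝ → ℝ) (hmeas : Measurable g)
    (hg : ∀ x ∈ Set.Icc (0:ℝ) 1, -1 ≤ g x)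
    (hint : IntegrableOn (fun x => g x ^ 4) (Set.Icc (0:ℝ) 1)) :
    Tendsto
      (fun p : ℝ => (1 / p ^ 2) *
        ∫ x in Set.Icc (0:ℝ) 1, p * g x * Real.log (1 + p * g x))
      (nhdsWithin 0 (Set.Ioi 0))
      (nhds (∫ x in Set.Icc (0:ℝ) 1, g x ^ 2)) ∧
    Tendsto
      (fun p : ℝ => (1 / p ^ 2) *
        ∫ x in Set.Icc (0:ℝ) 1,
          (-Real.log (1 + p * g x) + (1 + p * g x) * Real.log (1 + p * g x)))
      (nhdsWithin 0 (Set.Ioi 0))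
      (nhds (∫ x in Set.Icc (0:ℝ) 1, g x ^ 2)) := by
  have hsq : IntegrableOn (fun x => g x ^ 2) (Set.Icc (0:ℝ) 1) :=
    integrable_sq_of_integrable_pow_four hmeas.aestronglyMeasurable hint
  have hlim := tendsto_inv_sq_mul_integral_mul_log_one_add hmeas.aemeasurable
    (ae_restrict_of_forall_mem measurableSet_Icc hg) hsq
  refine ⟨hlim, ?_⟩
  have hsame : ∀ t : ℝ, -Real.log (1 + t) + (1 + t) * Real.log (1 + t) = t * Real.log (1 + t) :=
    fun t => by ring
  simpa only [hsame] using hlim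
end
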